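/- Let A be the space of Laurent series K((z)) extended by a formal symbol log z (i.e., A = K((z)) ⊕ K·log z as a K-vector space), with derivation d sending f(z) + a·log z to (f'(z) + a/z) dz, and residue map Res on Ω¹ = K((z))dz picking the coefficient of dz/z. Then there exists a unique antisymmetric K-bilinear form ⟨ , ⟩ : A × A → K such that ⟨F, G⟩ = Res(F dG) whenever Res(dF) = 0. -/

import Mathlib

noncomputable section

variable (K : Type*) [Field K]

/-- Formal derivative of a Laurent series. -/
def lderiv (f : LaurentSeries K) : LaurentSeries K where
  coeff n := ((n + 1 : ℤ) : K) * f.coeff (n + 1)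
  isPWO_support' := by
    apply Set.IsPWO.mono (f.isPWO_support.image_of_monotone
      (f := fun n : ℤ => n - 1) (fun a b h => by dsimp; omega))
    intro n hn
    simp only [Function.mem_support] at hn
    refine ⟨n + 1, fun h => hn ?_, by ring⟩
    simp [h]

/-- The differential on `A = K((z)) ⊕ K·log z`. -/
def dA (F : LaurentSeries K × K) : LaurentSeries K :=
  lderiv K F.1 + F.2 • (HahnSeries.single (-1 : ℤ) (1 : K))

/-- The residue: coefficient of `dz/z`. -/
def Res (ω : LaurentSeries K) : K := ω.coeff (-1)

end

/-!
Write `G = g + b log z` with `g = ∑ gⱼ zʲ`. An antisymmetric extension is forced: in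
characteristic `0` antisymmetry gives `⟨log z, log z⟩ = 0`, hence
`⟨G, log z⟩ = Res (g dz/z) = g₀`, and so `⟨f + a log z, G⟩ = Res (f dG) - a g₀`.
This form is antisymmetric because `Res (f dg) + Res (g df) = ∑_{i+j=0} (i + j) fᵢ gⱼ = 0`,
the constant coefficient of `f θg + g θf` for the Euler operator `θ = z d/dz`.
-/

open HahnSeries

section

variable (K : Type*) [Field K]

@[simp] lemma lderiv_coeff (f : LaurentSeries K) (n : ℤ) :
    (lderiv K f).coeff n = ((n + 1 : ℤ) : K) * f.coeff (n + 1) := rfl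

lemma lderiv_add (f g : LaurentSeries K) : lderiv K (f + g) = lderiv K f + lderiv K g := by
  ext n
  simp [mul_add]

lemma lderiv_smul (c : K) (f : LaurentSeries K) : lderiv K (c • f) = c • lderiv K f := by
  ext n
  simp only [lderiv_coeff, coeff_smul, smul_eq_mul]
  ring

lemma laurentSeries_smul_mul (c : K) (f g : LaurentSeries K) : c • f * g = c • (f * g) := by
  rw [← single_zero_mul_eq_smul, ← single_zero_mul_eq_smul, mul_assoc]

lemma laurentSeries_mul_smul (c : K) (f g : LaurentSeries K) : f * c • g = c • (f * g) := by
  rw [← single_zero_mul_eq_smul, ← single_zero_mul_eq_smul, mul_left_comm]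

lemma res_eq_coeff_zero_single_one_mul (ω : LaurentSeries K) :
    Res K ω = (single (1 : ℤ) (1 : K) * ω).coeff 0 := by
  simp [Res, coeff_single_mul]

noncomputable def eulerDeriv (f : LaurentSeries K) : LaurentSeries K :=
  single (1 : ℤ) (1 : K) * lderiv K f

@[simp] lemma eulerDeriv_coeff (f : LaurentSeries K) (n : ℤ) :
    (eulerDeriv K f).coeff n = n * f.coeff n := by
  simp [eulerDeriv, coeff_single_mul]

lemma support_eulerDeriv_subset (f : LaurentSeries K) : (eulerDeriv K f).support ⊆ f.support :=
  fun n hn h => hn (by simp [h])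

lemma res_mul_lderiv (f g : LaurentSeries K) :
    Res K (f * lderiv K g) = (f * eulerDeriv K g).coeff 0 := by
  rw [res_eq_coeff_zero_single_one_mul, mul_left_comm, eulerDeriv]

lemma res_mul_lderiv_add_res_mul_lderiv (f g : LaurentSeries K) :
    Res K (f * lderiv K g) + Res K (g * lderiv K f) = 0 := by
  rw [res_mul_lderiv, res_mul_lderiv, mul_comm g,
    coeff_mul_right' g.isPWO_support (support_eulerDeriv_subset K g),
    coeff_mul_left' f.isPWO_support (support_eulerDeriv_subset K f), ← Finset.sum_add_distrib]
  refine Finset.sum_eq_zero fun ij hij => ?_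
  have hsum : (ij.1 : K) + ij.2 = 0 := by
    rw [← Int.cast_add, (Finset.mem_antidiagonal.mp hij).2.2, Int.cast_zero]
  simp only [eulerDeriv_coeff]
  linear_combination f.coeff ij.1 * g.coeff ij.2 * hsum

lemma res_mul_single (f : LaurentSeries K) : Res K (f * single (-1 : ℤ) (1 : K)) = f.coeff 0 := by
  simp [Res, coeff_mul_single]

lemma res_dA (F : LaurentSeries K × K) : Res K (dA K F) = F.2 := by
  simp [dA, Res]

lemma dA_add (F G : LaurentSeries K × K) : dA K (F + G) = dA K F + dA K G := by
  simp only [dA, Prod.fst_add, Prod.snd_add, lderiv_add, add_smul]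
  abel

lemma dA_smul (c : K) (F : LaurentSeries K × K) : dA K (c • F) = c • dA K F := by
  simp only [dA, Prod.smul_fst, Prod.smul_snd, lderiv_smul, smul_add, smul_smul, smul_eq_mul]

lemma res_mul_dA (f : LaurentSeries K) (G : LaurentSeries K × K) :
    Res K (f * dA K G) = Res K (f * lderiv K G.1) + G.2 * f.coeff 0 := by
  rw [dA, mul_add, laurentSeries_mul_smul, ← res_mul_single, Res, Res, Res, coeff_add, coeff_smul,
    smul_eq_mul]

lemma dA_log : dA K (0, 1) = single (-1 : ℤ) (1 : K) := by
  have h0 : lderiv K 0 = 0 := by ext; simp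
  simp [dA, h0]

noncomputable def doubleIndex :
    (LaurentSeries K × K) →ₗ[K] (LaurentSeries K × K) →ₗ[K] K :=
  LinearMap.mk₂ K (fun F G => Res K (F.1 * dA K G) - F.2 * G.1.coeff 0)
    (fun F F' G => by simp only [Prod.fst_add, Prod.snd_add, add_mul, Res, coeff_add]; ring)
    (fun c F G => by
      simp only [Prod.smul_fst, Prod.smul_snd, laurentSeries_smul_mul, Res, coeff_smul,
        smul_eq_mul]
      ring)
    (fun F G G' => by simp only [Prod.fst_add, dA_add, mul_add, Res, coeff_add]; ring)
    (fun c G G' => by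
      simp only [Prod.smul_fst, dA_smul, laurentSeries_mul_smul, Res, coeff_smul, smul_eq_mul]
      ring)

lemma doubleIndex_apply (F G : LaurentSeries K × K) :
    doubleIndex K F G = Res K (F.1 * dA K G) - F.2 * G.1.coeff 0 := rfl

lemma doubleIndex_antisymm (F G : LaurentSeries K × K) :
    doubleIndex K F G = -doubleIndex K G F := by
  rw [doubleIndex_apply, doubleIndex_apply, res_mul_dA, res_mul_dA]
  linear_combination res_mul_lderiv_add_res_mul_lderiv K F.1 G.1

lemma doubleIndex_eq_res_of_res_dA_eq_zero (F G : LaurentSeries K × K)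
    (hF : Res K (dA K F) = 0) : doubleIndex K F G = Res K (F.1 * dA K G) := by
  rw [res_dA] at hF
  rw [doubleIndex_apply, hF, zero_mul, sub_zero]

lemma eq_doubleIndex [CharZero K]
    (B : (LaurentSeries K × K) →ₗ[K] (LaurentSeries K × K) →ₗ[K] K)
    (hanti : ∀ F G, B F G = -B G F)
    (hres : ∀ F G, Res K (dA K F) = 0 → B F G = Res K (F.1 * dA K G)) :
    B = doubleIndex K := by
  have hB_series : ∀ f G, B (f, 0) G = Res K (f * dA K G) := fun f G => hres (f, 0) G (res_dA K _)
  have hB_log_log : B (0, 1) (0, 1) = 0 :=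
    LinearMap.isAlt_iff_eq_neg_flip.mpr (LinearMap.ext₂ hanti) (0, 1)
  have hdecomp : ∀ F : LaurentSeries K × K, F = (F.1, 0) + F.2 • (0, 1) := fun F => by
    ext <;> simp
  have hB_log : ∀ G, B (0, 1) G = -G.1.coeff 0 := fun G => by
    rw [hanti, neg_inj]
    conv_lhs => rw [hdecomp G]
    simp only [map_add, map_smul, LinearMap.add_apply, LinearMap.smul_apply, hB_series,
      hB_log_log, dA_log, res_mul_single, smul_zero, add_zero]
  refine LinearMap.ext₂ fun F G => ?_
  conv_lhs => rw [hdecomp F]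
  simp only [map_add, map_smul, LinearMap.add_apply, LinearMap.smul_apply, hB_series, hB_log,
    doubleIndex_apply, smul_eq_mul, mul_neg, sub_eq_add_neg]

end

/-- existence and uniqueness of the double index on
`A = K((z)) ⊕ K·log z`: the unique antisymmetric bilinear form with
`⟨F,G⟩ = Res(F dG)` whenever `Res(dF) = 0`. -/
theorem stmt4 (K : Type*) [Field K] [CharZero K] :
    ∃! B : (LaurentSeries K × K) →ₗ[K] (LaurentSeries K × K) →ₗ[K] K,
      (∀ F G : LaurentSeries K × K, B F G = - B G F) ∧
      (∀ F G : LaurentSeries K × K, Res K (dA K F) = 0 →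
        B F G = Res K (F.1 * dA K G)) :=
  ⟨doubleIndex K, ⟨doubleIndex_antisymm K, doubleIndex_eq_res_of_res_dA_eq_zero K⟩,
    fun B ⟨hanti, hres⟩ => eq_doubleIndex K B hanti hres⟩
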